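/- Let (X, φ) be a permutation rack and x ∈ X an element whose orbit under φ has finite cardinality d. Define x_av(w) = x · Σ_{i=0}^{d−1} φ^i(x·w). Then d(x_av(w)) = x_av(d(w)) for all chains w, i.e., x_av is a chain map CR_•(X,φ)[2] → CR_•(X,φ). -/
import Mathlib


/-- Rack chains: free abelian group on `n`-tuples. -/
abbrev CR (X : Type) (n : ℕ) : Type := (Fin n → X) →₀ ℤ

/-- The monomial basis element. -/
noncomputable def mon {X : Type} {n : ℕ} (w : Fin n → X) : CR X n := Finsupp.single w 1

/-- Delete the `(i+1)`-st entry (1-indexed `k = i+1`). -/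
def del {X : Type} {n : ℕ} (w : Fin (n+1) → X) (i : Fin n) : Fin n → X :=
  fun j => if (j : ℕ) < (i : ℕ) then w j.castSucc else w j.succ

/-- Delete the `(i+1)`-st entry and act with it on all later entries. -/
def act {X : Type} (op : X → X → X) {n : ℕ} (w : Fin (n+1) → X) (i : Fin n) : Fin n → X :=
  fun j => if (j : ℕ) < (i : ℕ) then w j.castSucc else op (w i.castSucc) (w j.succ)

/-- Rack differential on a monomial. -/
noncomputable def dMon {X : Type} (op : X → X → X) {n : ℕ} (w : Fin (n+1) → X) : CR X n :=
  ∑ i : Fin n, ((-1 : ℤ) ^ (i : ℕ)) • (mon (del w i) - mon (act op w i))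

/-- The rack differential `CR_{n+1} → CR_n`. -/
noncomputable def d {X : Type} (op : X → X → X) (n : ℕ) : CR X (n+1) →+ CR X n :=
  Finsupp.liftAddHom fun w => zmultiplesHom _ (dMon op w)

/-- Left concatenation `w ↦ x·w`. -/
noncomputable def consHom {X : Type} (x : X) (n : ℕ) : CR X n →+ CR X (n+1) :=
  Finsupp.liftAddHom fun w => zmultiplesHom _ (mon (Fin.cons x w))

/-- Diagonal action of a map `φ` on chains. -/
noncomputable def mapChains {X : Type} (φ : X → X) (n : ℕ) : CR X n →+ CR X n :=
  Finsupp.liftAddHom fun w => zmultiplesHom _ (mon (φ ∘ w))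

/-- Cycles. -/
noncomputable def ZC {X : Type} (op : X → X → X) : (n : ℕ) → AddSubgroup (CR X n)
  | 0 => ⊤
  | (m+1) => (d op m).ker

/-- Boundaries. -/
noncomputable def BC {X : Type} (op : X → X → X) (n : ℕ) : AddSubgroup (CR X n) :=
  (d op n).range

/-- Rack homology. -/
abbrev HR (X : Type) (op : X → X → X) (n : ℕ) : Type :=
  ZC op n ⧸ ((BC op n).addSubgroupOf (ZC op n))

/-- The rack operation of a permutation rack. -/
def permOp {X : Type} (φ : X ≃ X) : X → X → X := fun _ y => φ y

/-- Multiplication by an element of `ℤX`. -/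
noncomputable def mulChain {X : Type} (v : X →₀ ℤ) (n : ℕ) : CR X n →+ CR X (n+1) :=
  ∑ x ∈ v.support, v x • consHom x n


open Function in

lemma orbit_fix {X : Type} (φ : X ≃ X) (x : X) (dd : ℕ)
    (hfin : (Set.range fun k : ℤ => (φ ^ k) x).Finite)
    (hcard : Nat.card (Set.range fun k : ℤ => (φ ^ k) x) = dd) :
    (⇑φ)^[dd] x = x := by
  classical
  have hsmul : (fun y : X => φ • y) = ⇑φ := rfl
  -- x is a periodic point of φ
  have hper : x ∈ periodicPts ⇑φ := by
    have hni : ¬ Function.Injective (fun k : ℤ => (φ ^ k) x) := by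
      intro hinj
      exact Set.infinite_range_of_injective hinj hfin
    simp only [Function.Injective, not_forall] at hni
    obtain ⟨a, b, hab, hne⟩ := hni
    have key : ∀ a b : ℤ, a < b → (φ ^ a) x = (φ ^ b) x → x ∈ periodicPts ⇑φ := by
      intro a b h hab
      refine ⟨(b - a).toNat, by omega, ?_⟩
      have : (φ ^ ((b - a).toNat : ℤ)) x = x := by
        rw [Int.toNat_of_nonneg (by omega), sub_eq_neg_add, zpow_add,
          Equiv.Perm.mul_apply, ← hab, ← Equiv.Perm.mul_apply, ← zpow_add]
        simp
      rw [IsPeriodicPt, IsFixedPt, Equiv.Perm.iterate_eq_pow, ← zpow_natCast]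
      exact this
    rcases lt_or_gt_of_ne hne with h | h
    · exact key a b h hab
    · exact key b a h hab.symm
  set p := minimalPeriod ⇑φ x with hp
  have hppos : 0 < p := minimalPeriod_pos_of_mem_periodicPts hper
  -- the orbit is the image of `Finset.range p`
  have hset : (Set.range fun k : ℤ => (φ ^ k) x) =
      ↑((Finset.range p).image fun i => (⇑φ)^[i] x) := by
    ext y
    simp only [Set.mem_range, Finset.coe_image, Set.mem_image, Finset.mem_coe,
      Finset.mem_range]
    constructor
    · rintro ⟨k, rfl⟩
      refine ⟨(k % (p : ℤ)).toNat, ?_, ?_⟩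
      · have h1 : 0 ≤ k % (p : ℤ) := Int.emod_nonneg k (by exact_mod_cast hppos.ne')
        have h2 : k % (p : ℤ) < p := Int.emod_lt_of_pos k (by exact_mod_cast hppos)
        omega
      · have := MulAction.zpow_smul_mod_minimalPeriod (a := φ) (b := x) k
        rw [hsmul] at this
        rw [Equiv.Perm.iterate_eq_pow, ← zpow_natCast,
          Int.toNat_of_nonneg (Int.emod_nonneg k (by exact_mod_cast hppos.ne'))]
        exact this
    · rintro ⟨i, hi, rfl⟩
      exact ⟨(i : ℤ), by rw [zpow_natCast, Equiv.Perm.iterate_eq_pow]⟩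
  have hcard2 : ((Finset.range p).image fun i => (⇑φ)^[i] x).card = p := by
    rw [Finset.card_image_of_injOn, Finset.card_range]
    intro a ha b hb hab
    exact iterate_injOn_Iio_minimalPeriod (by simpa using ha) (by simpa using hb) hab
  have : dd = p := by
    rw [← hcard, hset, Nat.card_coe_set_eq, Set.ncard_coe_finset, hcard2]
  rw [this]
  exact iterate_minimalPeriod

section Lemmas

variable {X : Type}

@[simp] lemma d_mon (op : X → X → X) {n : ℕ} (w : Fin (n+1) → X) :
    d op n (mon w) = dMon op w := by
  simp [d, mon, Finsupp.liftAddHom_apply_single]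

@[simp] lemma consHom_mon (x : X) {n : ℕ} (w : Fin n → X) :
    consHom x n (mon w) = mon (Fin.cons x w) := by
  simp [consHom, mon, Finsupp.liftAddHom_apply_single]

@[simp] lemma mapChains_mon (ψ : X → X) {n : ℕ} (w : Fin n → X) :
    mapChains ψ n (mon w) = mon (ψ ∘ w) := by
  simp [mapChains, mon, Finsupp.liftAddHom_apply_single]

lemma hom_ext {M : Type} [AddCommGroup M] {n : ℕ} {f g : CR X n →+ M}
    (h : ∀ w, f (mon w) = g (mon w)) : f = g := by
  apply Finsupp.addHom_ext
  intro a b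
  have hb : (Finsupp.single a b : CR X n) = b • mon a := by
    simp [mon, Finsupp.smul_single]
  rw [hb, map_zsmul, map_zsmul, h]

lemma hom_ext_apply {M : Type} [AddCommGroup M] {n : ℕ} {f g : CR X n →+ M}
    (h : ∀ w, f (mon w) = g (mon w)) (v : CR X n) : f v = g v := by
  rw [hom_ext h]

-- del/act of cons
lemma del_cons_zero {n : ℕ} (x : X) (w : Fin (n+1) → X) :
    del (Fin.cons x w) 0 = w := by
  funext j; simp [del, Fin.cons_succ]

lemma act_cons_zero {n : ℕ} (φ : X ≃ X) (x : X) (w : Fin (n+1) → X) :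
    act (permOp φ) (Fin.cons x w) 0 = ⇑φ ∘ w := by
  funext j; simp [act, permOp, Fin.cons_succ]

lemma del_cons_succ {n : ℕ} (x : X) (w : Fin (n+1) → X) (i : Fin n) :
    del (Fin.cons x w) i.succ = Fin.cons x (del w i) := by
  funext j
  refine Fin.cases ?_ (fun m => ?_) j
  · simp [del]
  · simp only [del, Fin.cons_succ, Fin.val_succ]
    by_cases h : (m : ℕ) < (i : ℕ)
    · rw [if_pos (by omega), if_pos h, ← Fin.succ_castSucc, Fin.cons_succ]
    · rw [if_neg (by omega), if_neg h]

lemma act_cons_succ {n : ℕ} (φ : X ≃ X) (x : X) (w : Fin (n+1) → X) (i : Fin n) :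
    act (permOp φ) (Fin.cons x w) i.succ = Fin.cons x (act (permOp φ) w i) := by
  funext j
  refine Fin.cases ?_ (fun m => ?_) j
  · simp [act]
  · simp only [act, permOp, Fin.cons_succ, Fin.val_succ]
    by_cases h : (m : ℕ) < (i : ℕ)
    · rw [if_pos (by omega), if_pos h, ← Fin.succ_castSucc, Fin.cons_succ]
    · rw [if_neg (by omega), if_neg h]

/-- Key identity: `d(x·w) = w - φ(w) - x·d(w)` on monomials. -/
lemma dMon_cons (φ : X ≃ X) (x : X) {n : ℕ} (w : Fin (n+1) → X) :
    dMon (permOp φ) (Fin.cons x w) =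
      mon w - mon (⇑φ ∘ w) - consHom x n (dMon (permOp φ) w) := by
  rw [dMon, Fin.sum_univ_succ]
  simp only [Fin.val_zero, pow_zero, one_smul, del_cons_zero, act_cons_zero φ x w,
    del_cons_succ, act_cons_succ, Fin.val_succ]
  rw [dMon, map_sum]
  simp only [map_zsmul, map_sub, consHom_mon, pow_succ, mul_neg_one, neg_smul,
    Finset.sum_neg_distrib, smul_sub]
  rw [sub_eq_add_neg (mon w - mon (⇑φ ∘ w)), ← Finset.sum_neg_distrib]
  congr 1
  refine Finset.sum_congr rfl fun i _ => ?_
  abel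

/-- Pointwise version: `d(x·v) = v - φ(v) - x·d(v)`. -/
lemma d_cons (φ : X ≃ X) (x : X) {n : ℕ} (v : CR X (n+1)) :
    d (permOp φ) (n+1) (consHom x (n+1) v) =
      v - mapChains ⇑φ (n+1) v - consHom x n (d (permOp φ) n v) := by
  refine hom_ext_apply (f := (d (permOp φ) (n+1)).comp (consHom x (n+1)))
    (g := AddMonoidHom.id _ - mapChains ⇑φ (n+1) - (consHom x n).comp (d (permOp φ) n))
    (fun w => ?_) v
  simp [dMon_cons]

/-- `mapChains ψ` commutes with `d` when `ψ` commutes with `φ`. -/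
lemma d_map (φ : X ≃ X) (ψ : X → X) (hψ : ∀ y, ψ (φ y) = φ (ψ y)) {n : ℕ} (v : CR X (n+1)) :
    d (permOp φ) n (mapChains ψ (n+1) v) = mapChains ψ n (d (permOp φ) n v) := by
  refine hom_ext_apply (f := (d (permOp φ) n).comp (mapChains ψ (n+1)))
    (g := (mapChains ψ n).comp (d (permOp φ) n)) (fun w => ?_) v
  have hdel : ∀ i : Fin n, del (ψ ∘ w) i = ψ ∘ del w i := by
    intro i; funext j; simp only [del, Function.comp_apply]; split <;> rfl
  have hact : ∀ i : Fin n, act (permOp φ) (ψ ∘ w) i = ψ ∘ act (permOp φ) w i := by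
    intro i; funext j
    simp only [act, permOp, Function.comp_apply]
    split
    · rfl
    · rw [hψ]
  simp [dMon, hdel, hact]

lemma map_cons (ψ : X → X) (x : X) {n : ℕ} (v : CR X n) :
    mapChains ψ (n+1) (consHom x n v) = consHom (ψ x) n (mapChains ψ n v) := by
  refine hom_ext_apply (f := (mapChains ψ (n+1)).comp (consHom x n))
    (g := (consHom (ψ x) n).comp (mapChains ψ n)) (fun w => ?_) v
  simp [Fin.comp_cons]

lemma map_map (ψ₁ ψ₂ : X → X) {n : ℕ} (v : CR X n) :
    mapChains ψ₁ n (mapChains ψ₂ n v) = mapChains (ψ₁ ∘ ψ₂) n v := by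
  refine hom_ext_apply (f := (mapChains ψ₁ n).comp (mapChains ψ₂ n))
    (g := mapChains (ψ₁ ∘ ψ₂) n) (fun w => ?_) v
  simp [Function.comp_assoc]

lemma map_id {n : ℕ} (v : CR X n) : mapChains id n v = v := by
  refine hom_ext_apply (f := mapChains id n) (g := AddMonoidHom.id _) (fun w => ?_) v
  simp [Function.id_comp]

end Lemmas

/-- For `x` with finite `φ`-orbit of cardinality `dd`, the averaged operator
`x_av(w) = x·Σ_{i<dd} φ^i(x·w)` is a chain map `CR_•(X,φ)[2] → CR_•(X,φ)`. -/
theorem averaged_mul_chain_map (X : Type) (φ : X ≃ X) (x : X) (dd : ℕ)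
    (hfin : (Set.range fun k : ℤ => (φ ^ k) x).Finite)
    (hcard : Nat.card (Set.range fun k : ℤ => (φ ^ k) x) = dd)
    (n : ℕ) (w : CR X (n+1)) :
    d (permOp φ) (n+2)
        (consHom x (n+2) (∑ i ∈ Finset.range dd, mapChains ((⇑φ)^[i]) (n+2) (consHom x (n+1) w))) =
      consHom x (n+1)
        (∑ i ∈ Finset.range dd, mapChains ((⇑φ)^[i]) (n+1) (consHom x n (d (permOp φ) n w))) := by
  classical
  have hx : (⇑φ)^[dd] x = x := orbit_fix φ x dd hfin hcard
  have hsucc : ∀ i : ℕ, (⇑φ) ∘ (⇑φ)^[i] = (⇑φ)^[i+1] :=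
    fun i => (Function.iterate_succ' ⇑φ i).symm
  have hcomm : ∀ (i : ℕ) (y : X), (⇑φ)^[i] (φ y) = φ ((⇑φ)^[i] y) := fun i y => by
    rw [← Function.iterate_succ_apply, Function.iterate_succ_apply']
  set u := ∑ i ∈ Finset.range dd, mapChains ((⇑φ)^[i]) (n+2) (consHom x (n+1) w) with hu
  rw [d_cons φ x u]
  have hA : mapChains ⇑φ (n+2) u =
      ∑ i ∈ Finset.range dd, mapChains ((⇑φ)^[i+1]) (n+2) (consHom x (n+1) w) := by
    rw [hu, map_sum]
    exact Finset.sum_congr rfl fun i _ => by rw [map_map, hsucc]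
  have htel1 : u - mapChains ⇑φ (n+2) u =
      consHom x (n+1) w - mapChains ((⇑φ)^[dd]) (n+2) (consHom x (n+1) w) := by
    rw [hA, hu, ← Finset.sum_sub_distrib,
      Finset.sum_range_sub' (fun i => mapChains ((⇑φ)^[i]) (n+2) (consHom x (n+1) w))]
    congr 1
    rw [Function.iterate_zero]
    exact map_id _
  have hB : d (permOp φ) (n+1) u = (w - mapChains ((⇑φ)^[dd]) (n+1) w) -
      ∑ i ∈ Finset.range dd, mapChains ((⇑φ)^[i]) (n+1) (consHom x n (d (permOp φ) n w)) := by
    rw [hu, map_sum]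
    have key : ∀ i ∈ Finset.range dd,
        d (permOp φ) (n+1) (mapChains ((⇑φ)^[i]) (n+2) (consHom x (n+1) w)) =
        (mapChains ((⇑φ)^[i]) (n+1) w - mapChains ((⇑φ)^[i+1]) (n+1) w) -
          mapChains ((⇑φ)^[i]) (n+1) (consHom x n (d (permOp φ) n w)) := by
      intro i _
      rw [d_map φ _ (hcomm i), d_cons, map_sub, map_sub, map_map, ← Function.iterate_succ]
    rw [Finset.sum_congr rfl key, Finset.sum_sub_distrib,
      Finset.sum_range_sub' (fun i => mapChains ((⇑φ)^[i]) (n+1) w)]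
    congr 2
    rw [Function.iterate_zero]
    exact map_id w
  rw [htel1, hB, map_sub (consHom x (n+1)), map_sub (consHom x (n+1)), map_cons, hx]
  abel
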